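/- Let n >= 2 and 1 <= i < j <= n. Every permutation x in S_n with x(1) = i and x(n) = j has at least n + i - j - 1 inversions, and this bound is attained: the permutation whose tuple is (i, 1, 2, ..., \hat{i}, ..., \hat{j}, ..., n, j), where the middle entries are the elements of {1,...,n} \ {i, j} in increasing order, has exactly n + i - j - 1 inversions. In particular the minimal length of an element of the coset W(i,j) = { x in S_n : x(1) = i, x(n) = j } is n + i - j - 1. -/

import Mathlib

/-!
The inversions `(1, q)` of `x` are the pairs with `x(q) < x(1) = i`, so there are exactly
`i - 1` of them; likewise exactly `n - j` inversions end at position `n`, and the two families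
are disjoint because `i < j`. This gives the lower bound, and when the middle entries increase
there are no other inversions.
-/

/-- `ap σ i` is the value, in one-indexed notation, of the permutation `σ ∈ Sₙ` at the
one-indexed position `i`; i.e. writing `σ` as the tuple `(σ(1), …, σ(n))` of elements of
`{1, …, n}`, `ap σ i = σ(i)` for `1 ≤ i ≤ n` (and junk value `0` otherwise). -/
def ap {n : ℕ} (σ : Equiv.Perm (Fin n)) (i : ℕ) : ℕ :=
  if h : 1 ≤ i ∧ i ≤ n then (σ ⟨i - 1, by omega⟩ : ℕ) + 1 else 0

/-- The number of inversions of a permutation in `Sₙ`, which equals its Coxeter length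
with respect to the generating set of adjacent transpositions. -/
def invCount {n : ℕ} (σ : Equiv.Perm (Fin n)) : ℕ :=
  (Finset.univ.filter fun p : Fin n × Fin n => p.1 < p.2 ∧ σ p.2 < σ p.1).card

/-- A permutation is an adjacent transposition `sᵢ = (i, i+1)`. -/
def IsAdjSwap {n : ℕ} (σ : Equiv.Perm (Fin n)) : Prop :=
  ∃ i j : Fin n, (i : ℕ) + 1 = (j : ℕ) ∧ σ = Equiv.swap i j

/-- A word in the adjacent transpositions. -/
def IsWord {n : ℕ} (l : List (Equiv.Perm (Fin n))) : Prop := ∀ τ ∈ l, IsAdjSwap τ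

/-- A reduced word: a word in the adjacent transpositions of minimal length among all
words representing the same permutation. -/
def IsReducedWord {n : ℕ} (l : List (Equiv.Perm (Fin n))) : Prop :=
  IsWord l ∧ ∀ l' : List (Equiv.Perm (Fin n)), IsWord l' → l'.prod = l.prod →
    l.length ≤ l'.length

/-- The Bruhat order on `Sₙ`: `x ≤ y` iff `x` is the product of a subword of some
reduced word for `y` in the adjacent transpositions. -/
def bruhatLE {n : ℕ} (x y : Equiv.Perm (Fin n)) : Prop :=
  ∃ l : List (Equiv.Perm (Fin n)), IsReducedWord l ∧ l.prod = y ∧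
    ∃ l' : List (Equiv.Perm (Fin n)), l'.Sublist l ∧ l'.prod = x

/-- The one-indexed tuple of the permutation `z_k ∈ Sₙ`, namely `(k, …, k+1)` where the
middle entries are the elements of `{1, …, n} \ {k, k+1}` in decreasing order:
`z_k(1) = k`, `z_k(n) = k+1`, `z_k(i) = n-i+2` for `1 < i ≤ n-k`, and `z_k(i) = n-i`
for `n-k < i < n`. -/
def zVal (n k i : ℕ) : ℕ :=
  if i = 1 then k else if i = n then k + 1 else if i ≤ n - k then n - i + 2 else n - i

open Finset Equiv

lemma ap_succ {n : ℕ} (σ : Perm (Fin n)) (p : Fin n) : ap σ (p + 1) = σ p + 1 := by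
  simp [ap]

lemma ap_one {m : ℕ} (σ : Perm (Fin (m + 1))) : ap σ 1 = σ 0 + 1 :=
  ap_succ σ 0

lemma ap_last {m : ℕ} (σ : Perm (Fin (m + 1))) : ap σ (m + 1) = σ (Fin.last m) + 1 :=
  ap_succ σ (Fin.last m)

lemma forall_ap_lt_iff_strictMonoOn {m : ℕ} (σ : Perm (Fin (m + 1))) :
    (∀ p q : ℕ, 1 < p → p < q → q < m + 1 → ap σ p < ap σ q) ↔
      StrictMonoOn σ (Set.Ioo 0 (Fin.last m)) := by
  constructor
  · rintro h a ⟨ha0, -⟩ b ⟨-, hbm⟩ hab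
    have := h (a + 1) (b + 1)
    simp only [ap_succ] at this
    simp only [Fin.lt_def, Fin.val_last, Fin.val_zero] at *
    omega
  · intro h p q hp hpq hq
    obtain ⟨a, rfl⟩ : ∃ a : Fin (m + 1), p = a + 1 := ⟨⟨p - 1, by omega⟩, by simp; omega⟩
    obtain ⟨b, rfl⟩ : ∃ b : Fin (m + 1), q = b + 1 := ⟨⟨q - 1, by omega⟩, by simp; omega⟩
    rw [ap_succ, ap_succ, add_lt_add_iff_right, ← Fin.lt_def]
    refine h ⟨?_, ?_⟩ ⟨?_, ?_⟩ ?_ <;> simp only [Fin.lt_def, Fin.val_zero, Fin.val_last] <;> omega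

def inversions {n : ℕ} (σ : Perm (Fin n)) : Finset (Fin n × Fin n) :=
  {p | p.1 < p.2 ∧ σ p.2 < σ p.1}

lemma invCount_eq_card_inversions {n : ℕ} (σ : Perm (Fin n)) :
    invCount σ = #(inversions σ) := rfl

lemma card_filter_apply_lt {n : ℕ} (σ : Perm (Fin n)) (k : Fin n) : #{b | σ b < k} = k := by
  rw [card_equiv σ (t := Iio k) (by simp), Fin.card_Iio]

lemma card_filter_lt_apply {n : ℕ} (σ : Perm (Fin n)) (k : Fin n) :
    #{a | k < σ a} = n - 1 - k := by
  rw [card_equiv σ (t := Ioi k) (by simp), Fin.card_Ioi]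

lemma card_inversions_filter_fst_eq_zero {m : ℕ} (σ : Perm (Fin (m + 1))) :
    #{p ∈ inversions σ | p.1 = 0} = σ 0 := by
  suffices {p ∈ inversions σ | p.1 = 0} = ({b | σ b < σ 0} : Finset _).map (.sectR 0 _) by
    rw [this, card_map, card_filter_apply_lt]
  ext ⟨a, b⟩
  simp only [inversions, mem_filter, mem_univ, true_and, mem_map,
    Function.Embedding.sectR_apply, Prod.mk.injEq]
  constructor
  · rintro ⟨⟨-, hb⟩, rfl⟩
    exact ⟨b, hb, rfl, rfl⟩
  · rintro ⟨b, hb, rfl, rfl⟩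
    exact ⟨⟨Fin.pos_iff_ne_zero.2 (by rintro rfl; exact hb.false), hb⟩, rfl⟩

lemma card_inversions_filter_snd_eq_last {m : ℕ} (σ : Perm (Fin (m + 1))) :
    #{p ∈ inversions σ | p.2 = Fin.last m} = m - σ (Fin.last m) := by
  suffices {p ∈ inversions σ | p.2 = Fin.last m} =
      ({a | σ (Fin.last m) < σ a} : Finset _).map (.sectL _ (Fin.last m)) by
    rw [this, card_map, card_filter_lt_apply, Nat.add_sub_cancel]
  ext ⟨a, b⟩
  simp only [inversions, mem_filter, mem_univ, true_and, mem_map,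
    Function.Embedding.sectL_apply, Prod.mk.injEq]
  constructor
  · rintro ⟨⟨-, ha⟩, rfl⟩
    exact ⟨a, ha, rfl, rfl⟩
  · rintro ⟨a, ha, rfl, rfl⟩
    exact ⟨⟨Fin.lt_last_iff_ne_last.2 (by rintro rfl; exact ha.false), ha⟩, rfl⟩

lemma card_inversions_filter_boundary {m : ℕ} (σ : Perm (Fin (m + 1)))
    (h : σ 0 < σ (Fin.last m)) :
    #{p ∈ inversions σ | p.1 = 0 ∨ p.2 = Fin.last m} = σ 0 + (m - σ (Fin.last m)) := by
  rw [filter_or, card_union_of_disjoint, card_inversions_filter_fst_eq_zero,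
    card_inversions_filter_snd_eq_last]
  refine disjoint_filter.2 fun p hp h0 hl => ?_
  simp only [inversions, mem_filter] at hp
  rw [h0, hl] at hp
  exact hp.2.2.not_gt h

lemma le_invCount_of_apply_zero_lt_apply_last {m : ℕ} (σ : Perm (Fin (m + 1)))
    (h : σ 0 < σ (Fin.last m)) :
    σ 0 + (m - σ (Fin.last m)) ≤ invCount σ :=
  card_inversions_filter_boundary σ h ▸ card_filter_le _ _

lemma invCount_eq_of_strictMonoOn {m : ℕ} (σ : Perm (Fin (m + 1)))
    (h : σ 0 < σ (Fin.last m)) (hσ : StrictMonoOn σ (Set.Ioo 0 (Fin.last m))) :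
    invCount σ = σ 0 + (m - σ (Fin.last m)) := by
  rw [← card_inversions_filter_boundary σ h, invCount_eq_card_inversions, filter_true_of_mem]
  rintro ⟨a, b⟩ hab
  simp only [inversions, mem_filter, mem_univ, true_and] at hab
  by_contra! hmid
  refine (hσ ?_ ?_ hab.1).not_gt hab.2
  · exact ⟨Fin.pos_iff_ne_zero.2 hmid.1, hab.1.trans (Fin.lt_last_iff_ne_last.2 hmid.2)⟩
  · exact ⟨(Fin.pos_iff_ne_zero.2 hmid.1).trans hab.1, Fin.lt_last_iff_ne_last.2 hmid.2⟩

/-- One-line notation, 0-indexed, of the permutation `(a, 0, 1, …, â, …, b̂, …, m, b)`. -/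
def minCosetRepVal (m a b p : ℕ) : ℕ :=
  if p = 0 then a else if p = m then b else if p ≤ a then p - 1 else if p < b then p else p + 1

lemma exists_perm_strictMonoOn {m : ℕ} (a b : Fin (m + 1)) (hab : a < b) :
    ∃ σ : Perm (Fin (m + 1)), σ 0 = a ∧ σ (Fin.last m) = b ∧
      StrictMonoOn σ (Set.Ioo 0 (Fin.last m)) := by
  rw [Fin.lt_def] at hab
  let f (p : Fin (m + 1)) : Fin (m + 1) :=
    ⟨minCosetRepVal m a b p, by have := b.2; unfold minCosetRepVal; split_ifs <;> omega⟩
  have hf : Function.Injective f := fun p q h => by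
    have := p.2; have := q.2
    simp only [f, minCosetRepVal, Fin.mk.injEq] at h
    ext; split_ifs at h <;> omega
  refine ⟨ofBijective f hf.bijective_of_finite, ?_, ?_, ?_⟩
  · ext; simp [f, minCosetRepVal]
  · ext; simp [f, minCosetRepVal]; omega
  · rintro p ⟨hp0, -⟩ q ⟨-, hqm⟩ hpq
    simp only [Fin.lt_def, Fin.val_zero, Fin.val_last] at hp0 hqm hpq
    simp only [ofBijective_apply, Fin.lt_def, f, minCosetRepVal]
    split_ifs <;> omega

theorem min_length_in_coset_general (n i j : ℕ) (hi : 1 ≤ i) (hij : i < j)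
    (hj : j ≤ n) :
    (∀ x : Equiv.Perm (Fin n), ap x 1 = i → ap x n = j →
        n + i - j - 1 ≤ invCount x) ∧
    (∀ m : Equiv.Perm (Fin n), ap m 1 = i → ap m n = j →
        (∀ p q : ℕ, 1 < p → p < q → q < n → ap m p < ap m q) →
        invCount m = n + i - j - 1) ∧
    (∃ m : Equiv.Perm (Fin n), ap m 1 = i ∧ ap m n = j ∧
        ∀ p q : ℕ, 1 < p → p < q → q < n → ap m p < ap m q) := by
  obtain ⟨k, rfl⟩ : ∃ k, n = k + 1 := ⟨n - 1, by omega⟩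
  refine ⟨fun x hx1 hxn => ?_, fun x hx1 hxn hmono => ?_, ?_⟩
  · rw [ap_one] at hx1
    rw [ap_last] at hxn
    have := le_invCount_of_apply_zero_lt_apply_last x (by rw [Fin.lt_def]; omega)
    omega
  · rw [ap_one] at hx1
    rw [ap_last] at hxn
    have hσ := (forall_ap_lt_iff_strictMonoOn x).1 hmono
    rw [invCount_eq_of_strictMonoOn x (by rw [Fin.lt_def]; omega) hσ]
    omega
  · obtain ⟨σ, hσ0, hσl, hσ⟩ :=
      exists_perm_strictMonoOn (m := k) ⟨i - 1, by omega⟩ ⟨j - 1, by omega⟩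
        (by simp only [Fin.mk_lt_mk]; omega)
    refine ⟨σ, ?_, ?_, (forall_ap_lt_iff_strictMonoOn σ).2 hσ⟩
    · rw [ap_one, hσ0]; simp; omega
    · rw [ap_last, hσl]; simp; omega

/-- Let `n ≥ 2` and `1 ≤ i < j ≤ n`.  Every permutation `x ∈ Sₙ` with
`x(1) = i` and `x(n) = j` has at least `n + i - j - 1` inversions; the bound is attained,
and it is attained exactly by the permutation `(i, 1, 2, …, î, …, ĵ, …, n, j)` whose
middle entries are the elements of `{1, …, n} \ {i, j}` in increasing order.  In
particular the minimal length of an element of `W(i,j) = {x : x(1) = i, x(n) = j}` is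
`n + i - j - 1`. -/
theorem min_length_in_coset (n i j : ℕ) (hn : 2 ≤ n) (hi : 1 ≤ i) (hij : i < j)
    (hj : j ≤ n) :
    (∀ x : Equiv.Perm (Fin n), ap x 1 = i → ap x n = j →
        n + i - j - 1 ≤ invCount x) ∧
    (∀ m : Equiv.Perm (Fin n), ap m 1 = i → ap m n = j →
        (∀ p q : ℕ, 1 < p → p < q → q < n → ap m p < ap m q) →
        invCount m = n + i - j - 1) ∧
    (∃ m : Equiv.Perm (Fin n), ap m 1 = i ∧ ap m n = j ∧
        ∀ p q : ℕ, 1 < p → p < q → q < n → ap m p < ap m q) :=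
  min_length_in_coset_general n i j hi hij hj
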